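/- Let n be a natural number, X a topological space, and λ an ordinal with λ < wrk_n(X). If the subspace w_n^λ(X) is homeomorphic to a topological space A, then wrk_n(X) = λ + wrk_n(A), where + denotes ordinal addition. -/

import Mathlib

open Set Filter Topology

noncomputable section

/-- The unit `n`-sphere in `ℝ^{n+1}`. -/
def Sph (n : ℕ) : Set (EuclideanSpace ℝ (Fin (n + 1))) := Metric.sphere 0 1

/-- The basepoint `s₀ = (1,0,…,0)` of the `n`-sphere. -/
def sphBase (n : ℕ) : Sph n :=
  ⟨EuclideanSpace.single 0 1, by
    simp [Sph, mem_sphere_iff_norm, EuclideanSpace.norm_single]⟩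

/-- A map `S^n → X` is essential if it is not (freely) homotopic to any constant map. -/
def Essential {n : ℕ} {X : Type*} [TopologicalSpace X] (f : C(Sph n, X)) : Prop :=
  ∀ x : X, ¬ f.Homotopic (ContinuousMap.const _ x)

/-- A sequence of maps `S^n → X` converges to `x ∈ X` if every neighborhood of `x`
eventually contains all of their images. -/
def ConvergesTo {n : ℕ} {X : Type*} [TopologicalSpace X] (f : ℕ → C(Sph n, X)) (x : X) : Prop :=
  ∀ U ∈ 𝓝 x, ∀ᶠ k in atTop, ∀ s, f k s ∈ U

/-- `x` is a `π_n`-wild point of `X`. -/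
def IsWildPoint (n : ℕ) {X : Type*} [TopologicalSpace X] (x : X) : Prop :=
  ∃ f : ℕ → C(Sph n, X), (∀ k, Essential (f k)) ∧ (∀ k, f k (sphBase n) = x) ∧ ConvergesTo f x

/-- `x` is a free `π_n`-wild point of `X`. -/
def IsFreeWildPoint (n : ℕ) {X : Type*} [TopologicalSpace X] (x : X) : Prop :=
  ∃ f : ℕ → C(Sph n, X), (∀ k, Essential (f k)) ∧ ConvergesTo f x

/-- The `π_n`-wild set of a space `X`. -/
def wildSet (n : ℕ) (X : Type*) [TopologicalSpace X] : Set X := {x | IsWildPoint n x}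

/-- The free `π_n`-wild set of a space `X`. -/
def freeWildSet (n : ℕ) (X : Type*) [TopologicalSpace X] : Set X := {x | IsFreeWildPoint n x}

/-- The `π_n`-wild set of a subset `S ⊆ X`, computed in the subspace topology,
regarded again as a subset of `X`. -/
def wildSub (n : ℕ) {X : Type*} [TopologicalSpace X] (S : Set X) : Set X :=
  Subtype.val '' wildSet n ↥S

def freeWildSub (n : ℕ) {X : Type*} [TopologicalSpace X] (S : Set X) : Set X :=
  Subtype.val '' freeWildSet n ↥S

/-- The transfinitely iterated `π_n`-wild sets of `X`. -/
def iterWild (n : ℕ) (X : Type*) [TopologicalSpace X] (κ : Ordinal) : Set X :=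
  Ordinal.limitRecOn (motive := fun _ => Set X) κ Set.univ (fun _ ih => wildSub n ih)
    (fun κ _ ih => ⋂ (o : Ordinal) (h : o < κ), ih o h)

/-- The transfinitely iterated free `π_n`-wild sets of `X`. -/
def iterFreeWild (n : ℕ) (X : Type*) [TopologicalSpace X] (κ : Ordinal) : Set X :=
  Ordinal.limitRecOn (motive := fun _ => Set X) κ Set.univ (fun _ ih => freeWildSub n ih)
    (fun κ _ ih => ⋂ (o : Ordinal) (h : o < κ), ih o h)

/-- The `π_n`-wild rank of `X`: the least ordinal `κ` with `w_n^{κ+1}(X) = w_n^κ(X)`. -/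
def wrk (n : ℕ) (X : Type*) [TopologicalSpace X] : Ordinal :=
  sInf {κ | iterWild n X (κ + 1) = iterWild n X κ}

/-- The free `π_n`-wild rank of `X`. -/
def fwrk (n : ℕ) (X : Type*) [TopologicalSpace X] : Ordinal :=
  sInf {κ | iterFreeWild n X (κ + 1) = iterFreeWild n X κ}

section Aux

variable {n : ℕ} {Y Z : Type*} [TopologicalSpace Y] [TopologicalSpace Z]

theorem essential_comp (e : Y ≃ₜ Z) {f : C(Sph n, Y)} (hf : Essential f) :
    Essential ((ContinuousMap.mk e e.continuous).comp f) := by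
  intro z hz
  apply hf (e.symm z)
  have h2 := ContinuousMap.Homotopic.comp (ContinuousMap.Homotopic.refl (ContinuousMap.mk e.symm e.symm.continuous)) hz
  have e1 : (ContinuousMap.mk (⇑e.symm) e.symm.continuous).comp
      ((ContinuousMap.mk (⇑e) e.continuous).comp f) = f := by
    ext x; simp
  have e2 : (ContinuousMap.mk (⇑e.symm) e.symm.continuous).comp
      (ContinuousMap.const (Sph n) z) = ContinuousMap.const (Sph n) (e.symm z) := by
    ext x; simp
  rwa [e1, e2] at h2

theorem IsWildPoint.map (e : Y ≃ₜ Z) {x : Y} (h : IsWildPoint n x) : IsWildPoint n (e x) := by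
  obtain ⟨f, hess, hbase, hconv⟩ := h
  refine ⟨fun k => (ContinuousMap.mk e e.continuous).comp (f k),
    fun k => essential_comp e (hess k), fun k => by simp [hbase k], ?_⟩
  intro U hU
  have h1 : e ⁻¹' U ∈ 𝓝 x := e.continuous.continuousAt.preimage_mem_nhds hU
  filter_upwards [hconv _ h1] with k hk s using hk s

theorem wildSet_homeo (e : Y ≃ₜ Z) : wildSet n Z = ⇑e '' wildSet n Y := by
  ext z
  constructor
  · intro hz
    exact ⟨e.symm z, IsWildPoint.map e.symm hz, e.apply_symm_apply z⟩
  · rintro ⟨y, hy, rfl⟩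
    exact IsWildPoint.map e hy

theorem wildSub_homeo (e : Y ≃ₜ Z) (S : Set Y) : wildSub n (⇑e '' S) = ⇑e '' wildSub n S := by
  rw [wildSub, wildSet_homeo (e.image S), wildSub, ← image_comp, ← image_comp]
  exact image_congr fun a _ => by simp

/-- The canonical homeomorphism between a subset of a subspace and its image in the
ambient space. -/
def nestHomeo (S : Set Y) (T : Set ↥S) : ↥T ≃ₜ ↥(Subtype.val '' T) where
  toEquiv := Equiv.Set.image Subtype.val T Subtype.val_injective
  continuous_toFun := by
    apply Continuous.subtype_mk
    exact continuous_subtype_val.comp continuous_subtype_val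
  continuous_invFun := by
    have hemb : Topology.IsEmbedding (fun t : ↥T => (t : Y)) :=
      Topology.IsEmbedding.subtypeVal.comp Topology.IsEmbedding.subtypeVal
    rw [hemb.continuous_iff]
    show Continuous ((fun t : ↥T => (t : Y)) ∘
      ⇑(Equiv.Set.image Subtype.val T Subtype.val_injective).symm)
    have : (fun t : ↥T => (t : Y)) ∘ (Equiv.Set.image Subtype.val T Subtype.val_injective).symm
        = fun x : ↥(Subtype.val '' T) => (x : Y) := by
      funext x
      have := (Equiv.Set.image Subtype.val T Subtype.val_injective).apply_symm_apply x
      have h2 := congrArg Subtype.val this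
      simpa [Equiv.Set.image, Equiv.Set.imageOfInjOn] using h2
    rw [this]
    exact continuous_subtype_val

theorem nestHomeo_val (S : Set Y) (T : Set ↥S) (t : ↥T) :
    ((nestHomeo S T t : ↥(Subtype.val '' T)) : Y) = ((t : ↥S) : Y) := rfl

theorem wildSub_nest (S : Set Y) (T : Set ↥S) :
    wildSub n (Subtype.val '' T) = Subtype.val '' wildSub n T := by
  rw [wildSub, wildSet_homeo (nestHomeo S T), wildSub, ← image_comp, ← image_comp]
  exact image_congr fun a _ => nestHomeo_val S T a

theorem iterWild_zero : iterWild n Y 0 = Set.univ := by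
  rw [iterWild, Ordinal.limitRecOn_zero]

theorem iterWild_succ (κ : Ordinal) : iterWild n Y (κ + 1) = wildSub n (iterWild n Y κ) := by
  rw [iterWild, Ordinal.add_one_eq_succ, Ordinal.limitRecOn_succ]
  rfl

theorem iterWild_limit {κ : Ordinal} (hκ : Order.IsSuccLimit κ) :
    iterWild n Y κ = ⋂ (o : Ordinal) (_ : o < κ), iterWild n Y o := by
  rw [iterWild, Ordinal.limitRecOn_limit _ _ _ _ hκ]
  rfl

theorem wildSub_subset (S : Set Y) : wildSub n S ⊆ S := by
  rintro _ ⟨t, _, rfl⟩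
  exact t.2

theorem iterWild_anti : ∀ {κ μ : Ordinal}, κ ≤ μ → iterWild n Y μ ⊆ iterWild n Y κ := by
  intro κ μ
  induction μ using Ordinal.limitRecOn with
  | zero => intro h; rw [nonpos_iff_eq_zero.mp h]
  | add_one o ih =>
    intro h
    rcases (lt_or_eq_of_le h) with h' | h'
    · have : κ ≤ o := Order.lt_add_one_iff.mp h'
      refine subset_trans ?_ (ih this)
      rw [iterWild_succ]
      exact wildSub_subset _
    · rw [h']
  | limit o ho ih =>
    intro h
    rcases (lt_or_eq_of_le h) with h' | h'
    · rw [iterWild_limit ho]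
      exact iInter₂_subset κ h'
    · rw [h']

theorem iterWild_homeo (e : Y ≃ₜ Z) : ∀ κ : Ordinal, iterWild n Z κ = ⇑e '' iterWild n Y κ := by
  intro κ
  induction κ using Ordinal.limitRecOn with
  | zero => rw [iterWild_zero, iterWild_zero, image_univ, e.surjective.range_eq]
  | add_one o ih =>
    rw [iterWild_succ, iterWild_succ, ih, wildSub_homeo]
  | limit o ho ih =>
    rw [iterWild_limit ho, iterWild_limit ho, image_iInter₂ e.bijective]
    exact iInter₂_congr ih

theorem iterWild_homeo_stab (e : Y ≃ₜ Z) (κ : Ordinal) :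
    (iterWild n Z (κ + 1) = iterWild n Z κ) ↔ (iterWild n Y (κ + 1) = iterWild n Y κ) := by
  rw [iterWild_homeo e, iterWild_homeo e, Set.image_eq_image e.injective]

theorem wrk_homeo (e : Y ≃ₜ Z) : wrk n Y = wrk n Z := by
  unfold wrk
  congr 1
  ext κ
  simp only [mem_setOf_eq]
  exact (iterWild_homeo_stab e κ).symm

theorem iterWild_add (X : Type*) [TopologicalSpace X] (l : Ordinal) :
    ∀ κ : Ordinal,
      iterWild n X (l + κ) = Subtype.val '' iterWild n ↥(iterWild n X l) κ := by
  intro κ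
  induction κ using Ordinal.limitRecOn with
  | zero => rw [add_zero, iterWild_zero, image_univ, Subtype.range_coe]
  | add_one o ih =>
    rw [← add_assoc, iterWild_succ, iterWild_succ, ih, wildSub_nest]
  | limit o ho ih =>
    have hlim : Order.IsSuccLimit (l + o) := Ordinal.isSuccLimit_add l ho
    have h1 : iterWild n X (l + o) = ⋂ (o' : Ordinal) (_ : o' < o), iterWild n X (l + o') := by
      rw [iterWild_limit hlim]
      apply subset_antisymm
      · refine subset_iInter₂ fun o' ho' => ?_
        exact iInter₂_subset (l + o') (add_lt_add_right ho' l)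
      · intro x hx
        have hx' : ∀ o' < o, x ∈ iterWild n X (l + o') := fun o' ho' =>
          mem_iInter₂.mp hx o' ho'
        refine mem_iInter₂.mpr fun o' ho' => ?_
        rcases le_or_gt o' l with hle | hlt
        · have h0 : x ∈ iterWild n X l := by
            have := hx' 0 ho.pos
            rwa [add_zero] at this
          exact iterWild_anti hle h0
        · have heq : l + (o' - l) = o' := Ordinal.add_sub_cancel_of_le hlt.le
          have hlt2 : o' - l < o := by
            refine lt_of_add_lt_add_left (a := l) ?_
            rw [heq]; exact ho'
          have := hx' _ hlt2
          rwa [heq] at this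
    rw [h1, iterWild_limit ho]
    have h2 : (⋂ (o' : Ordinal) (_ : o' < o), iterWild n X (l + o')) =
        ⋂ (o' : Ordinal) (_ : o' < o),
          Subtype.val '' iterWild n ↥(iterWild n X l) o' := iInter₂_congr ih
    rw [h2]
    apply subset_antisymm
    · intro x hx
      have h0 := mem_iInter₂.mp hx 0 ho.pos
      obtain ⟨y, _, rfl⟩ := h0
      refine ⟨y, mem_iInter₂.mpr fun o' ho' => ?_, rfl⟩
      obtain ⟨y', hy', hval⟩ := mem_iInter₂.mp hx o' ho'
      rwa [Subtype.val_injective hval] at hy'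
    · rintro _ ⟨y, hy, rfl⟩
      exact mem_iInter₂.mpr fun o' ho' => ⟨y, mem_iInter₂.mp hy o' ho', rfl⟩

end Aux

/-- If `λ < wrk_n(X)` and the subspace `w_n^λ(X)` is homeomorphic to `A`,
then `wrk_n(X) = λ + wrk_n(A)`. -/
theorem statement10 (n : ℕ) (X : Type*) [TopologicalSpace X] (A : Type*) [TopologicalSpace A]
    (l : Ordinal) (hl : l < wrk n X)
    (h : Nonempty (↥(iterWild n X l) ≃ₜ A)) :
    wrk n X = l + wrk n A := by
  obtain ⟨e⟩ := h
  have hA : wrk n ↥(iterWild n X l) = wrk n A := wrk_homeo e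
  rw [← hA]
  have key : ∀ κ : Ordinal,
      (iterWild n X (l + κ + 1) = iterWild n X (l + κ)) ↔
        (iterWild n ↥(iterWild n X l) (κ + 1) = iterWild n ↥(iterWild n X l) κ) := by
    intro κ
    have h1 := iterWild_add (n := n) X l (κ + 1)
    have h2 := iterWild_add (n := n) X l κ
    rw [← add_assoc] at h1
    rw [h1, h2, Set.image_eq_image Subtype.val_injective]
  have hne : {κ : Ordinal | iterWild n X (κ + 1) = iterWild n X κ}.Nonempty := by
    by_contra hempty
    rw [Set.not_nonempty_iff_eq_empty] at hempty
    have hz : wrk n X = 0 := by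
      rw [wrk, hempty, Ordinal.sInf_empty]
    rw [hz] at hl
    exact (zero_le (a := l)).not_gt hl
  have hmem : iterWild n X (wrk n X + 1) = iterWild n X (wrk n X) := csInf_mem hne
  have hle : l ≤ wrk n X := hl.le
  have hμ : l + (wrk n X - l) = wrk n X := Ordinal.add_sub_cancel_of_le hle
  have hμS : (wrk n X - l) ∈ {κ : Ordinal |
      iterWild n ↥(iterWild n X l) (κ + 1) = iterWild n ↥(iterWild n X l) κ} :=
    (key (wrk n X - l)).1 (by rw [hμ]; exact hmem)
  have h2 : wrk n ↥(iterWild n X l) ≤ wrk n X - l := csInf_le' hμS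
  have hmemS : iterWild n ↥(iterWild n X l) (wrk n ↥(iterWild n X l) + 1) =
      iterWild n ↥(iterWild n X l) (wrk n ↥(iterWild n X l)) := csInf_mem ⟨_, hμS⟩
  have h3 : wrk n X ≤ l + wrk n ↥(iterWild n X l) := csInf_le' ((key _).2 hmemS)
  refine le_antisymm h3 ?_
  calc l + wrk n ↥(iterWild n X l) ≤ l + (wrk n X - l) := add_le_add_right h2 l
    _ = wrk n X := hμ
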